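/- Through every point of ℂℙ³ there passes exactly one twistor line: for every nonzero z ∈ ℂ⁴ there exists a unique 2-dimensional complex subspace W ⊆ ℂ⁴ with j̃(W) = W and z ∈ W. -/

import Mathlib

/-!
The subspace `span {z, j̃ z}` is the twistor line through `z`: since `j̃² = -1` it is `j̃`-stable,
and it is two-dimensional because `j̃` has no eigenvectors (`j̃ z = a z` would give
`-z = j̃² z = |a|² z`). Any `j̃`-stable subspace through `z` contains it, so a two-dimensional one
equals it.
-/

/-- The conjugate-linear map `j̃ : ℂ⁴ → ℂ⁴`,
`j̃(z₀,z₁,z₂,z₃) = (−conj z₁, conj z₀, −conj z₃, conj z₂)`,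
inducing the fixed-point-free anti-holomorphic involution `j` on `ℂℙ³`. -/
noncomputable def jt (z : Fin 4 → ℂ) : Fin 4 → ℂ :=
  ![-(starRingEnd ℂ) (z 1), (starRingEnd ℂ) (z 0), -(starRingEnd ℂ) (z 3), (starRingEnd ℂ) (z 2)]

lemma jt_add (x y : Fin 4 → ℂ) : jt (x + y) = jt x + jt y := by
  funext i; fin_cases i <;> simp [jt] <;> ring

lemma jt_smul (c : ℂ) (x : Fin 4 → ℂ) : jt (c • x) = starRingEnd ℂ c • jt x := by
  funext i; fin_cases i <;> simp [jt]

lemma jt_neg (x : Fin 4 → ℂ) : jt (-x) = -jt x := by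
  funext i; fin_cases i <;> simp [jt]

lemma jt_jt (z : Fin 4 → ℂ) : jt (jt z) = -z := by
  funext i; fin_cases i <;> simp [jt]

lemma jt_ne_smul {z : Fin 4 → ℂ} (hz : z ≠ 0) (a : ℂ) : jt z ≠ a • z := by
  intro h
  have hvanish : (1 + (Complex.normSq a : ℂ)) • z = 0 := by
    have := congrArg jt h
    rw [jt_jt, jt_smul, h, smul_smul, mul_comm, Complex.mul_conj] at this
    rw [add_smul, one_smul, ← this, add_neg_cancel]
  have hcoeff : (1 + (Complex.normSq a : ℂ)) ≠ 0 := by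
    exact_mod_cast (add_pos_of_pos_of_nonneg one_pos (Complex.normSq_nonneg a)).ne'
  exact hz ((smul_eq_zero.1 hvanish).resolve_left hcoeff)

lemma linearIndependent_jt {z : Fin 4 → ℂ} (hz : z ≠ 0) : LinearIndependent ℂ ![z, jt z] :=
  (LinearIndependent.pair_iff' hz).2 fun a h => jt_ne_smul hz a h.symm

lemma image_jt_eq_iff (W : Submodule ℂ (Fin 4 → ℂ)) :
    jt '' (W : Set (Fin 4 → ℂ)) = W ↔ ∀ w ∈ W, jt w ∈ W := by
  constructor
  · intro h w hw
    rw [← SetLike.mem_coe, ← h]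
    exact Set.mem_image_of_mem jt hw
  · intro h
    refine subset_antisymm (Set.image_subset_iff.2 h) fun w hw => ⟨-jt w, W.neg_mem (h w hw), ?_⟩
    rw [jt_neg, jt_jt, neg_neg]

noncomputable def twistorLine (z : Fin 4 → ℂ) : Submodule ℂ (Fin 4 → ℂ) :=
  Submodule.span ℂ (Set.range ![z, jt z])

lemma mem_twistorLine_self (z : Fin 4 → ℂ) : z ∈ twistorLine z :=
  Submodule.subset_span ⟨0, rfl⟩

lemma finrank_twistorLine {z : Fin 4 → ℂ} (hz : z ≠ 0) : Module.finrank ℂ (twistorLine z) = 2 :=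
  finrank_span_eq_card (linearIndependent_jt hz)

lemma jt_mem_twistorLine {z w : Fin 4 → ℂ} (hw : w ∈ twistorLine z) : jt w ∈ twistorLine z := by
  rw [twistorLine, Matrix.range_cons_cons_empty, Submodule.mem_span_pair] at *
  obtain ⟨a, b, rfl⟩ := hw
  refine ⟨-starRingEnd ℂ b, starRingEnd ℂ a, ?_⟩
  rw [jt_add, jt_smul, jt_smul, jt_jt]
  module

lemma twistorLine_le {z : Fin 4 → ℂ} {W : Submodule ℂ (Fin 4 → ℂ)}
    (hW : jt '' (W : Set (Fin 4 → ℂ)) = W) (hz : z ∈ W) : twistorLine z ≤ W := by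
  rw [twistorLine, Submodule.span_le, Set.range_subset_iff]
  intro i
  fin_cases i
  exacts [hz, (image_jt_eq_iff W).1 hW z hz]

/-- Through every point of `ℂℙ³` there passes exactly one twistor line: for every nonzero
`z ∈ ℂ⁴` there is a unique 2-dimensional complex subspace `W ⊆ ℂ⁴` with `j̃(W) = W` and
`z ∈ W`. -/
theorem stmt8 (z : Fin 4 → ℂ) (hz : z ≠ 0) :
    ∃! W : Submodule ℂ (Fin 4 → ℂ),
      Module.finrank ℂ W = 2 ∧ jt '' (W : Set (Fin 4 → ℂ)) = (W : Set (Fin 4 → ℂ)) ∧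
      z ∈ W := by
  refine ⟨twistorLine z, ⟨finrank_twistorLine hz,
    (image_jt_eq_iff _).2 fun _ => jt_mem_twistorLine, mem_twistorLine_self z⟩, ?_⟩
  rintro W ⟨hdim, hW, hzW⟩
  exact (Submodule.eq_of_le_of_finrank_eq (twistorLine_le hW hzW)
    (by rw [finrank_twistorLine hz, hdim])).symm
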